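/- Let p : B → E be a G-Galois extension of commutative rings. Then the category of B-modules is equivalent to the category of E-modules D equipped with a (semilinear) right G-action satisfying (e·d)·g = (e·g)·(d·g), with morphisms the G-equivariant E-module maps; one direction sends a B-module A to E ⊗_B A with (e ⊗ a)·g = (e·g) ⊗ a, and the other sends (D, action) to the fixed B-module D^G. -/

import Mathlib

open scoped TensorProduct

universe u

variable {G : Type u} [Group G] {B E : Type u} [CommRing B] [CommRing E] [Algebra B E]

/-- An `E`-module with a semilinear right `G`-action: `(e·d)·g = (e·g)·(d·g)`. -/
structure SemilinearGMod (G : Type u) [Group G] (B E : Type u) [CommRing B] [CommRing E]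
    [Algebra B E] (act : G → E ≃+* E) : Type (u + 1) where
  carrier : Type u
  [isAddCommGroup : AddCommGroup carrier]
  [isModule : Module E carrier]
  ρ : G → carrier →+ carrier
  ρ_one : ρ 1 = AddMonoidHom.id carrier
  ρ_mul : ∀ g h : G, ρ (g * h) = (ρ h).comp (ρ g)
  ρ_smul : ∀ (g : G) (e : E) (d : carrier), ρ g (e • d) = act g e • ρ g d

attribute [instance] SemilinearGMod.isAddCommGroup SemilinearGMod.isModule

/-- The category of `E`-modules with semilinear `G`-action: morphisms are
`G`-equivariant `E`-linear maps. -/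
instance SemilinearGMod.category (act : G → E ≃+* E) :
    CategoryTheory.Category (SemilinearGMod G B E act) where
  Hom D D' := {f : D.carrier →ₗ[E] D'.carrier // ∀ (g : G) (d : D.carrier),
    f (D.ρ g d) = D'.ρ g (f d)}
  id D := ⟨LinearMap.id, fun _ _ => rfl⟩
  comp f k := ⟨k.1.comp f.1, by intro g d; simp [f.2 g d, k.2 g]⟩
  id_comp f := by apply Subtype.ext; simp
  comp_id f := by apply Subtype.ext; simp
  assoc f k l := by apply Subtype.ext; simp [LinearMap.comp_assoc]

/-- The action of `g` on `E` as a `B`-linear map (it fixes `B`). -/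
def actLin (act : G → E ≃+* E)
    (hfix : ∀ (g : G) (b : B), act g (algebraMap B E b) = algebraMap B E b)
    (g : G) : E →ₗ[B] E where
  toFun := act g
  map_add' := (act g).map_add
  map_smul' := by intro b e; simp [Algebra.smul_def, map_mul, hfix]

/-- The standard semilinear action of `g` on `E ⊗_B A`, i.e. `(e ⊗ a)·g = (e·g) ⊗ a`. -/
noncomputable def tensorAct (act : G → E ≃+* E)
    (hfix : ∀ (g : G) (b : B), act g (algebraMap B E b) = algebraMap B E b)
    (A : Type u) [AddCommGroup A] [Module B A] (g : G) :
    E ⊗[B] A →ₗ[B] E ⊗[B] A :=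
  LinearMap.rTensor A (actLin act hfix g)

/-!
A Galois coordinate system, i.e. elements `xᵢ, yᵢ` of `E` with `∑ᵢ (xᵢ·g) yᵢ = δ_{g,1}` (a preimage
of `δ₁` under `h`), yields the dual basis formula `e = ∑ᵢ tr(e xᵢ) yᵢ` for the trace
`tr e = ∑_g e·g ∈ B`. So `E` is a finitely generated `B`-module on which the ideal `tr(E)` acts
surjectively, and the determinant trick gives `c` with `tr c = 1`. The unit `A → (E ⊗ A)^G` then
has the retraction `e ⊗ a ↦ tr(c e) a`, which is also a section since an invariant `ξ` equals
`∑_g (c ξ)·g`; the counit `E ⊗ D^G → D` has the inverse `d ↦ ∑ᵢ yᵢ ⊗ ∑_g (xᵢ d)·g`.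
-/

open TensorProduct CategoryTheory

namespace GaloisDescent

variable (act : G → E ≃+* E) (hact1 : act 1 = RingEquiv.refl E)
  (hactmul : ∀ g h : G, act (g * h) = (act g).trans (act h))
  (hfix : ∀ (g : G) (b : B), act g (algebraMap B E b) = algebraMap B E b)
  (hfixed : ∀ e : E, (∀ g : G, act g e = e) ↔ ∃ b : B, algebraMap B E b = e)
  (hinj : Function.Injective (algebraMap B E))

section BaseChange

variable (A : Type u) [AddCommGroup A] [Module B A]

omit [Group G] in
@[simp] lemma tensorAct_tmul (g : G) (e : E) (a : A) :
    tensorAct act hfix A g (e ⊗ₜ a) = act g e ⊗ₜ a := rfl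

omit [Group G] in
lemma tensorAct_smul (g : G) (e : E) (x : E ⊗[B] A) :
    tensorAct act hfix A g (e • x) = act g e • tensorAct act hfix A g x := by
  induction x using TensorProduct.induction_on with
  | zero => simp
  | tmul e' a => simp [smul_tmul']
  | add x y hx hy => simp only [smul_add, map_add, hx, hy]

include hact1 in
lemma tensorAct_one : tensorAct act hfix A 1 = LinearMap.id := by
  have : actLin act hfix 1 = LinearMap.id := LinearMap.ext fun e => by simp [actLin, hact1]
  rw [tensorAct, this, LinearMap.rTensor_id]

include hactmul in
lemma tensorAct_mul (g h : G) :
    tensorAct act hfix A (g * h) = tensorAct act hfix A h ∘ₗ tensorAct act hfix A g := by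
  have : actLin act hfix (g * h) = actLin act hfix h ∘ₗ actLin act hfix g :=
    LinearMap.ext fun e => by simp [actLin, hactmul]
  rw [tensorAct, this, LinearMap.rTensor_comp]; rfl

noncomputable def baseChangeObj : SemilinearGMod G B E act where
  carrier := E ⊗[B] A
  ρ g := (tensorAct act hfix A g).toAddMonoidHom
  ρ_one := by rw [tensorAct_one act hact1 hfix]; rfl
  ρ_mul g h := by rw [tensorAct_mul act hactmul hfix]; rfl
  ρ_smul := tensorAct_smul act hfix A

omit [Group G] in
variable {A} in
lemma baseChange_tensorAct {A' : Type u} [AddCommGroup A'] [Module B A'] (f : A →ₗ[B] A')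
    (g : G) (x : E ⊗[B] A) :
    f.baseChange E (tensorAct act hfix A g x) = tensorAct act hfix A' g (f.baseChange E x) := by
  induction x using TensorProduct.induction_on with
  | zero => simp
  | tmul e a => simp
  | add x y hx hy => simp only [map_add, hx, hy]

noncomputable def baseChangeFunctor : ModuleCat.{u} B ⥤ SemilinearGMod G B E act where
  obj A := baseChangeObj act hact1 hactmul hfix A
  map f := ⟨f.hom.baseChange E, baseChange_tensorAct act hfix f.hom⟩
  map_id _ := Subtype.ext LinearMap.baseChange_id
  map_comp f f' := Subtype.ext (LinearMap.baseChange_comp f.hom f'.hom)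

end BaseChange

section Invariants

variable {act} (D : SemilinearGMod G B E act)

instance instModuleCarrier : Module B D.carrier :=
  Module.compHom D.carrier (algebraMap B E)

instance instIsScalarTowerCarrier : IsScalarTower B E D.carrier :=
  ⟨fun b e d => by rw [Algebra.smul_def, mul_smul]; rfl⟩

def invariants : Submodule B D.carrier where
  carrier := {d | ∀ g, D.ρ g d = d}
  add_mem' hx hy g := by rw [map_add, hx g, hy g]
  zero_mem' g := map_zero _
  smul_mem' b d hd g := by
    change D.ρ g (algebraMap B E b • d) = algebraMap B E b • d
    rw [D.ρ_smul, hfix, hd g]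

variable {D} in
noncomputable def invariantsMap {D' : SemilinearGMod G B E act} (f : D ⟶ D') :
    invariants hfix D →ₗ[B] invariants hfix D' where
  toFun d := ⟨f.1 d, fun g => by rw [← f.2 g, d.2 g]⟩
  map_add' x y := Subtype.ext (f.1.map_add x y)
  map_smul' b x := Subtype.ext (f.1.map_smul (algebraMap B E b) x)

noncomputable def invariantsFunctor : SemilinearGMod G B E act ⥤ ModuleCat.{u} B where
  obj D := ModuleCat.of B (invariants hfix D)
  map f := ModuleCat.ofHom (invariantsMap hfix f)

noncomputable def counit : E ⊗[B] invariants hfix D →ₗ[E] D.carrier :=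
  (invariants hfix D).subtype.liftBaseChange E

@[simp] lemma counit_tmul (e : E) (d : invariants hfix D) :
    counit hfix D (e ⊗ₜ d) = e • (d : D.carrier) := rfl

lemma counit_tensorAct (g : G) (x : E ⊗[B] invariants hfix D) :
    counit hfix D (tensorAct act hfix _ g x) = D.ρ g (counit hfix D x) := by
  induction x using TensorProduct.induction_on with
  | zero => simp
  | tmul e d => rw [tensorAct_tmul, counit_tmul, counit_tmul, D.ρ_smul, d.2 g]
  | add x y hx hy => simp only [map_add, hx, hy]

def isoOfLinearEquiv {D D' : SemilinearGMod G B E act} (f : D.carrier ≃ₗ[E] D'.carrier)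
    (hf : ∀ g d, f (D.ρ g d) = D'.ρ g (f d)) : D ≅ D' where
  hom := ⟨f.toLinearMap, hf⟩
  inv := ⟨f.symm.toLinearMap, fun g d => f.injective <| by simp [hf]⟩
  hom_inv_id := Subtype.ext (LinearMap.ext f.symm_apply_apply)
  inv_hom_id := Subtype.ext (LinearMap.ext f.apply_symm_apply)

lemma counit_comp_baseChange {D D' : SemilinearGMod G B E act} (f : D ⟶ D') :
    counit hfix D' ∘ₗ (invariantsMap hfix f).baseChange E = f.1 ∘ₗ counit hfix D := by
  ext d
  simp [invariantsMap]

end Invariants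

structure IsGaloisCoordinates (S : Finset (E × E)) : Prop where
  sum_mul_eq_one : ∑ q ∈ S, q.1 * q.2 = 1
  sum_act_mul_eq_zero : ∀ g ≠ 1, ∑ q ∈ S, act g q.1 * q.2 = 0

include hact1 hfix in
lemma exists_isGaloisCoordinates
    (hh : ∀ f : (E ⊗[B] E) →+ (G → E),
      (∀ (e e' : E) (g : G), f (e ⊗ₜ[B] e') g = act g e * e') → Function.Bijective f) :
    ∃ S : Finset (E × E), IsGaloisCoordinates act S := by
  classical
  let f : E ⊗[B] E →ₗ[B] (G → E) :=
    LinearMap.pi fun g => TensorProduct.lift ((LinearMap.mul B E).comp (actLin act hfix g))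
  have hf (e e' : E) (g : G) : f (e ⊗ₜ e') g = act g e * e' := rfl
  obtain ⟨x, hx⟩ := (hh f.toAddMonoidHom hf).2 (Pi.single 1 1)
  obtain ⟨S, rfl⟩ := TensorProduct.exists_finset x
  refine ⟨S, ?_, fun g hg => ?_⟩
  · simpa [hf, hact1] using congrFun hx 1
  · simpa [hf, hg] using congrFun hx g

section Trace

variable [Fintype G]

include hactmul in
lemma act_sum_act (h : G) (e : E) : act h (∑ g, act g e) = ∑ g, act g e := by
  rw [map_sum]
  exact Fintype.sum_equiv (Equiv.mulRight h) _ _ fun g => by simp [hactmul]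

include hactmul hfixed in
lemma exists_algebraMap_eq_sum_act (e : E) : ∃ b : B, algebraMap B E b = ∑ g, act g e :=
  (hfixed _).mp fun h => act_sum_act act hactmul h e

noncomputable def trace : E →ₗ[B] B :=
  let t e := (exists_algebraMap_eq_sum_act act hactmul hfixed e).choose
  have ht e : algebraMap B E (t e) = ∑ g, act g e :=
    (exists_algebraMap_eq_sum_act act hactmul hfixed e).choose_spec
  { toFun := t
    map_add' e e' := hinj <| by
      rw [map_add, ht, ht, ht, ← Finset.sum_add_distrib]
      simp only [map_add]
    map_smul' b e := hinj <| by
      rw [RingHom.id_apply, Algebra.smul_def, Algebra.smul_def, map_mul, ht, ht, Finset.mul_sum]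
      simp only [map_mul, hfix, Algebra.algebraMap_self, RingHom.id_apply] }

lemma algebraMap_trace (e : E) :
    algebraMap B E (trace act hactmul hfix hfixed hinj e) = ∑ g, act g e :=
  (exists_algebraMap_eq_sum_act act hactmul hfixed e).choose_spec

end Trace

namespace IsGaloisCoordinates

variable [Fintype G] {act} {S : Finset (E × E)} (hS : IsGaloisCoordinates act S)

include hact1 hS in
lemma sum_smul_eq {M : Type*} [AddCommGroup M] [Module E M] (v : G → M) :
    ∑ g, (∑ q ∈ S, act g q.1 * q.2) • v g = v 1 := by
  rw [Fintype.sum_eq_single 1 fun g hg => by rw [hS.sum_act_mul_eq_zero g hg, zero_smul], hact1]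
  simp [hS.sum_mul_eq_one]

include hact1 hS in
lemma sum_trace_mul_smul (e : E) :
    ∑ q ∈ S, trace act hactmul hfix hfixed hinj (e * q.1) • q.2 = e := calc
  _ = ∑ q ∈ S, ∑ g, act g e * (act g q.1 * q.2) := by
    refine Finset.sum_congr rfl fun q _ => ?_
    simp [Algebra.smul_def, algebraMap_trace, Finset.sum_mul, mul_assoc]
  _ = ∑ g, (∑ q ∈ S, act g q.1 * q.2) • act g e := by
    rw [Finset.sum_comm]
    simp only [smul_eq_mul, Finset.sum_mul]
    exact Finset.sum_congr rfl fun g _ => Finset.sum_congr rfl fun q _ => by ring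
  _ = e := by rw [hS.sum_smul_eq hact1, hact1]; rfl

include hact1 hS in
lemma exists_trace_eq_one : ∃ c : E, trace act hactmul hfix hfixed hinj c = 1 := by
  classical
  set I : Ideal B := LinearMap.range (trace act hactmul hfix hfixed hinj)
  have hspan (e : E) : e ∈ I • Submodule.span B (Prod.snd '' (S : Set (E × E))) := by
    rw [← hS.sum_trace_mul_smul hact1 hactmul hfix hfixed hinj e]
    exact Submodule.sum_mem _ fun q hq =>
      Submodule.smul_mem_smul ⟨_, rfl⟩ (Submodule.subset_span ⟨q, hq, rfl⟩)
  have htop : Submodule.span B (Prod.snd '' (S : Set (E × E))) = ⊤ :=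
    eq_top_iff.2 fun e _ => Submodule.smul_le_right (hspan e)
  obtain ⟨r, hr1, hr0⟩ := Submodule.exists_sub_one_mem_and_smul_eq_zero_of_fg_of_le_smul I ⊤
    ⟨(S.image Prod.snd), by simpa using htop⟩ fun e _ => htop ▸ hspan e
  have hr : r = 0 := hinj <| by simpa [Algebra.smul_def] using hr0 1 trivial
  obtain ⟨c, hc⟩ := I.neg_mem (show r - 1 ∈ I from hr1)
  exact ⟨c, by simpa [hr] using hc⟩

end IsGaloisCoordinates

section Unit

variable [Fintype G] (A : Type u) [AddCommGroup A] [Module B A]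

noncomputable def unitMap : A →ₗ[B] invariants hfix (baseChangeObj act hact1 hactmul hfix A) where
  toFun a := ⟨(1 : E) ⊗ₜ a, fun g => by change act g 1 ⊗ₜ[B] a = _; rw [map_one]⟩
  map_add' a a' := Subtype.ext (tmul_add _ a a')
  map_smul' b a := Subtype.ext <| by
    change (1 : E) ⊗ₜ (b • a) = algebraMap B E b • (1 : E) ⊗ₜ[B] a
    rw [tmul_smul, algebraMap_smul]

include hfixed hinj in
lemma unitMap_bijective {S : Finset (E × E)} (hS : IsGaloisCoordinates act S) :
    Function.Bijective (unitMap act hact1 hactmul hfix A) := by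
  obtain ⟨c, hc⟩ := hS.exists_trace_eq_one hact1 hactmul hfix hfixed hinj
  set tr := trace act hactmul hfix hfixed hinj
  let t : E ⊗[B] A →ₗ[B] A := TensorProduct.lid B A ∘ₗ (tr ∘ₗ LinearMap.mulLeft B c).rTensor A
  have ht (x : E ⊗[B] A) : (1 : E) ⊗ₜ t x = ∑ g, tensorAct act hfix A g (c • x) := by
    induction x using TensorProduct.induction_on with
    | zero => simp
    | tmul e a =>
      simp only [t, LinearMap.comp_apply, LinearMap.rTensor_tmul, LinearEquiv.coe_coe, lid_tmul,
        LinearMap.mulLeft_apply, tmul_smul, smul_tmul', Algebra.smul_def, mul_one,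
        algebraMap_trace, sum_tmul, tr, tensorAct_tmul, map_mul, Algebra.algebraMap_self,
        RingHom.id_apply]
    | add x y hx hy => simp only [map_add, tmul_add, hx, hy, smul_add, Finset.sum_add_distrib]
  have ht_invariant (x : E ⊗[B] A) (hx : ∀ g, tensorAct act hfix A g x = x) :
      (1 : E) ⊗ₜ t x = x := calc
    _ = ∑ g, act g c • x := by simp only [ht, tensorAct_smul, hx]
    _ = x := by rw [← Finset.sum_smul, ← algebraMap_trace act hactmul hfix hfixed hinj, hc,
          map_one, one_smul]
  refine Function.bijective_iff_has_inverse.mpr ⟨fun x => t x.1, fun a => ?_, fun x => ?_⟩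
  · simp [unitMap, t, hc]
  · exact Subtype.ext (ht_invariant x.1 x.2)

end Unit

section Counit

variable [Fintype G] {act} (D : SemilinearGMod G B E act)

def invariantsNorm : D.carrier →+ invariants hfix D where
  toFun d := ⟨∑ g, D.ρ g d, fun h => by
    rw [map_sum]
    exact Fintype.sum_equiv (Equiv.mulRight h) _ _ fun g => by simp [D.ρ_mul]⟩
  map_zero' := Subtype.ext (by simp)
  map_add' d d' := Subtype.ext (by simp [Finset.sum_add_distrib])

lemma invariantsNorm_smul_of_mem (e : E) {d : D.carrier} (hd : d ∈ invariants hfix D) :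
    invariantsNorm hfix D (e • d) = trace act hactmul hfix hfixed hinj e • ⟨d, hd⟩ :=
  Subtype.ext <| by
    change ∑ g, D.ρ g (e • d) = algebraMap B E (trace act hactmul hfix hfixed hinj e) • d
    simp only [D.ρ_smul, hd _, algebraMap_trace, Finset.sum_smul]

include hact1 hactmul hfixed hinj in
lemma counit_bijective {S : Finset (E × E)} (hS : IsGaloisCoordinates act S) :
    Function.Bijective (counit hfix D) := by
  let ν : D.carrier →+ E ⊗[B] invariants hfix D := ∑ q ∈ S,
    (TensorProduct.mk B E _ q.2).toAddMonoidHom.comp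
      ((invariantsNorm hfix D).comp (DistribSMul.toAddMonoidHom D.carrier q.1))
  have hν (d : D.carrier) : ν d = ∑ q ∈ S, q.2 ⊗ₜ invariantsNorm hfix D (q.1 • d) := by
    simp [ν]
  refine Function.bijective_iff_has_inverse.mpr ⟨ν, fun x => ?_, fun d => ?_⟩
  · induction x using TensorProduct.induction_on with
    | zero => simp
    | tmul e d =>
      rw [counit_tmul, hν]
      calc ∑ q ∈ S, q.2 ⊗ₜ invariantsNorm hfix D (q.1 • e • (d : D.carrier))
          = ∑ q ∈ S, (trace act hactmul hfix hfixed hinj (e * q.1) • q.2) ⊗ₜ d :=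
            Finset.sum_congr rfl fun q _ => by
              rw [smul_smul, mul_comm, invariantsNorm_smul_of_mem hactmul hfix hfixed hinj D _ d.2,
                tmul_smul, smul_tmul']
        _ = e ⊗ₜ d := by rw [← sum_tmul, hS.sum_trace_mul_smul hact1 hactmul hfix hfixed hinj]
    | add x y hx hy => rw [map_add, map_add, hx, hy]
  · calc counit hfix D (ν d) = ∑ g, (∑ q ∈ S, act g q.1 * q.2) • D.ρ g d := by
          simp only [hν, map_sum, counit_tmul, invariantsNorm, AddMonoidHom.coe_mk,
            ZeroHom.coe_mk, Finset.smul_sum, D.ρ_smul, smul_smul, Finset.sum_smul]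
          rw [Finset.sum_comm]
          simp_rw [mul_comm]
      _ = d := by rw [hS.sum_smul_eq hact1, D.ρ_one]; rfl

end Counit

variable [Fintype G]

noncomputable def descentEquivalence {S : Finset (E × E)} (hS : IsGaloisCoordinates act S) :
    ModuleCat.{u} B ≌ SemilinearGMod G B E act :=
  CategoryTheory.Equivalence.mk (baseChangeFunctor act hact1 hactmul hfix) (invariantsFunctor hfix)
    (NatIso.ofComponents (fun A => (LinearEquiv.ofBijective _
      (unitMap_bijective act hact1 hactmul hfix hfixed hinj A hS)).toModuleIso)
      fun f => by ext a; rfl)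
    (NatIso.ofComponents (fun D => isoOfLinearEquiv (LinearEquiv.ofBijective _
      (counit_bijective hact1 hactmul hfix hfixed hinj D hS)) (counit_tensorAct hfix D))
      fun f => Subtype.ext (counit_comp_baseChange hfix f))

end GaloisDescent

theorem galois_descent_module_equivalence_general [Finite G]
    (act : G → E ≃+* E)
    (hact1 : act 1 = RingEquiv.refl E)
    (hactmul : ∀ g h : G, act (g * h) = (act g).trans (act h))
    (hfix : ∀ (g : G) (b : B), act g (algebraMap B E b) = algebraMap B E b)
    (hinj : Function.Injective (algebraMap B E))
    (hfixed : ∀ e : E, (∀ g : G, act g e = e) ↔ ∃ b : B, algebraMap B E b = e)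
    (hh : ∀ f : (E ⊗[B] E) →+ (G → E),
      (∀ (e e' : E) (g : G), f (e ⊗ₜ[B] e') g = act g e * e') → Function.Bijective f) :
    ∃ e : ModuleCat.{u} B ≌ SemilinearGMod G B E act,
      (∀ A : ModuleCat.{u} B,
        ∃ φ : (e.functor.obj A).carrier ≃ₗ[E] E ⊗[B] A,
          ∀ (g : G) (d : (e.functor.obj A).carrier),
            φ ((e.functor.obj A).ρ g d) = tensorAct act hfix A g (φ d)) ∧
      (∀ D : SemilinearGMod G B E act,
        ∃ ψ : (e.inverse.obj D) ≃ {d : D.carrier // ∀ g : G, D.ρ g d = d},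
          (∀ x y : e.inverse.obj D, (ψ (x + y)).1 = (ψ x).1 + (ψ y).1) ∧
          (∀ (b : B) (x : e.inverse.obj D),
            (ψ (b • x)).1 = algebraMap B E b • (ψ x).1)) := by
  cases nonempty_fintype G
  obtain ⟨S, hS⟩ := GaloisDescent.exists_isGaloisCoordinates act hact1 hfix hh
  exact ⟨GaloisDescent.descentEquivalence act hact1 hactmul hfix hfixed hinj hS,
    fun A => ⟨LinearEquiv.refl E _, fun _ _ => rfl⟩,
    fun D => ⟨Equiv.subtypeEquivRight fun _ => Iff.rfl, fun _ _ => rfl, fun _ _ => rfl⟩⟩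

/-- For a `G`-Galois extension of commutative rings `p : B → E`, the
category of `B`-modules is equivalent to the category of `E`-modules with a
semilinear right `G`-action; one direction sends `A` to `E ⊗_B A` with action
`(e ⊗ a)·g = (e·g) ⊗ a`, the other sends `(D, ρ)` to the fixed `B`-module `D^G`. -/
theorem galois_descent_module_equivalence [Finite G] [Nontrivial B] [Nontrivial E]
    (act : G → E ≃+* E)
    (hact1 : act 1 = RingEquiv.refl E)
    (hactmul : ∀ g h : G, act (g * h) = (act g).trans (act h))
    (hfix : ∀ (g : G) (b : B), act g (algebraMap B E b) = algebraMap B E b)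
    (hinj : Function.Injective (algebraMap B E))
    (hfixed : ∀ e : E, (∀ g : G, act g e = e) ↔ ∃ b : B, algebraMap B E b = e)
    (hh : ∀ f : (E ⊗[B] E) →+ (G → E),
      (∀ (e e' : E) (g : G), f (e ⊗ₜ[B] e') g = act g e * e') → Function.Bijective f) :
    ∃ e : ModuleCat.{u} B ≌ SemilinearGMod G B E act,
      (∀ A : ModuleCat.{u} B,
        ∃ φ : (e.functor.obj A).carrier ≃ₗ[E] E ⊗[B] A,
          ∀ (g : G) (d : (e.functor.obj A).carrier),
            φ ((e.functor.obj A).ρ g d) = tensorAct act hfix A g (φ d)) ∧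
      (∀ D : SemilinearGMod G B E act,
        ∃ ψ : (e.inverse.obj D) ≃ {d : D.carrier // ∀ g : G, D.ρ g d = d},
          (∀ x y : e.inverse.obj D, (ψ (x + y)).1 = (ψ x).1 + (ψ y).1) ∧
          (∀ (b : B) (x : e.inverse.obj D),
            (ψ (b • x)).1 = algebraMap B E b • (ψ x).1)) :=
  galois_descent_module_equivalence_general act hact1 hactmul hfix hinj hfixed hh
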